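/- Fix g ≥ 1 and z ∈ ℂ^g, and define θ(τ,z) := Σ_{n∈ℤ^g} exp(πi nᵗτn + 2πi nᵗz) (as a tsum) for an arbitrary complex g×g matrix τ. Then the function τ ↦ θ(τ,z), as a function on the complex vector space of all g×g complex matrices, is complex-differentiable at every symmetric matrix τ₀ whose imaginary part is positive definite. -/

import Mathlib

open Complex Matrix BigOperators

noncomputable section

/-- τ lies in the Siegel upper half-space: symmetric with positive definite imaginary part. -/
def IsSiegel {g : ℕ} (τ : Matrix (Fin g) (Fin g) ℂ) : Prop :=
  τ.IsSymm ∧ (τ.map Complex.im).PosDef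

/-- The `n`-th term of the series defining the theta function with characteristic `[ε;δ]`. -/
def thetaCharTerm {g : ℕ} (τ : Matrix (Fin g) (Fin g) ℂ) (ε δ : Fin g → ℝ)
    (z : Fin g → ℂ) (n : Fin g → ℤ) : ℂ :=
  Complex.exp ((Real.pi : ℂ) * Complex.I *
      ((fun j => (n j : ℂ) + (ε j : ℂ)) ⬝ᵥ (τ *ᵥ fun j => (n j : ℂ) + (ε j : ℂ)))
    + 2 * (Real.pi : ℂ) * Complex.I *
      ((fun j => (n j : ℂ) + (ε j : ℂ)) ⬝ᵥ fun j => z j + (δ j : ℂ)))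

/-- The theta function with characteristic `[ε;δ]`. -/
def thetaChar {g : ℕ} (τ : Matrix (Fin g) (Fin g) ℂ) (ε δ : Fin g → ℝ)
    (z : Fin g → ℂ) : ℂ :=
  ∑' n : Fin g → ℤ, thetaCharTerm τ ε δ z n

/-- The Riemann theta function. -/
def riemannTheta {g : ℕ} (τ : Matrix (Fin g) (Fin g) ℂ) (z : Fin g → ℂ) : ℂ :=
  thetaChar τ 0 0 z

/-- Interpret a mod-2 vector as a vector with entries in {0, 1/2}. -/
def toHalf {g : ℕ} (x : Fin g → ZMod 2) : Fin g → ℝ := fun i => ((x i).val : ℝ) / 2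

/-- The theta function of the second order with characteristic ε. -/
def theta2 {g : ℕ} (τ : Matrix (Fin g) (Fin g) ℂ) (ε : Fin g → ℝ) (z : Fin g → ℂ) : ℂ :=
  ∑' n : Fin g → ℤ,
    Complex.exp (2 * (Real.pi : ℂ) * Complex.I *
        ((fun j => (n j : ℂ) + (ε j : ℂ)) ⬝ᵥ (τ *ᵥ fun j => (n j : ℂ) + (ε j : ℂ)))
      + 4 * (Real.pi : ℂ) * Complex.I *
        ((fun j => (n j : ℂ) + (ε j : ℂ)) ⬝ᵥ z))

/-- The Igusa modular form F_g. -/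
def igusaF (g : ℕ) (τ : Matrix (Fin g) (Fin g) ℂ) : ℂ :=
  2 ^ g * ∑ m : (Fin g → ZMod 2) × (Fin g → ZMod 2),
      (thetaChar τ (toHalf m.1) (toHalf m.2) 0) ^ 16
    - (∑ m : (Fin g → ZMod 2) × (Fin g → ZMod 2),
      (thetaChar τ (toHalf m.1) (toHalf m.2) 0) ^ 8) ^ 2

/-- The standard symplectic form matrix J. -/
def sympJ (g : ℕ) : Matrix (Fin g ⊕ Fin g) (Fin g ⊕ Fin g) ℤ :=
  Matrix.fromBlocks 0 1 (-1) 0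

/-- The block matrix [[a,b],[c,d]] is symplectic. -/
def IsSymplectic {g : ℕ} (a b c d : Matrix (Fin g) (Fin g) ℤ) : Prop :=
  (Matrix.fromBlocks a b c d)ᵀ * sympJ g * Matrix.fromBlocks a b c d = sympJ g

/-- Entrywise coercion of an integer matrix to a complex matrix. -/
def intMat {g : ℕ} (a : Matrix (Fin g) (Fin g) ℤ) : Matrix (Fin g) (Fin g) ℂ :=
  a.map (Int.cast : ℤ → ℂ)

/-- The action of a symplectic block matrix on the Siegel space: τ ↦ (aτ+b)(cτ+d)⁻¹. -/
def sympAct {g : ℕ} (a b c d : Matrix (Fin g) (Fin g) ℤ)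
    (τ : Matrix (Fin g) (Fin g) ℂ) : Matrix (Fin g) (Fin g) ℂ :=
  (intMat a * τ + intMat b) * (intMat c * τ + intMat d)⁻¹








/-- Product of a summable nonneg function over coordinates is summable on the pi type. -/
lemma summable_pi_prod {h : ℤ → ℝ} (h0 : ∀ m, 0 ≤ h m) (hs : Summable h) :
    ∀ g : ℕ, Summable (fun n : Fin g → ℤ => ∏ i, h (n i)) := by
  intro g
  induction g with
  | zero => exact summable_of_finite_support (Set.toFinite _)
  | succ k ih =>
    have key := hs.mul_of_nonneg ih (fun m => h0 m)
      (fun n => Finset.prod_nonneg fun i _ => h0 (n i))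
    rw [← (Fin.consEquiv (fun _ : Fin (k+1) => ℤ)).summable_iff]
    apply key.congr
    intro p
    simp only [Function.comp, Fin.consEquiv_apply]
    rw [Fin.prod_univ_succ]
    simp [Fin.cons_succ]

lemma summable_one_add_abs_sq_exp {a b : ℝ} (ha : 0 < a) :
    Summable (fun m : ℤ => (1 + |(m : ℝ)|) ^ 2 * Real.exp (-a * (m : ℝ) ^ 2 + b * |(m : ℝ)|)) := by
  have hT : 0 < a / Real.pi := div_pos ha Real.pi_pos
  have key : ∀ k : ℕ, Summable (fun m : ℤ =>
      (|(m : ℝ)| ^ k) * Real.exp (-a * (m : ℝ) ^ 2 + b * |(m : ℝ)|)) := by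
    intro k
    have := summable_pow_mul_jacobiTheta₂_term_bound (b / (2 * Real.pi)) hT k
    apply this.congr
    intro m
    congr 1
    · push_cast; ring
    · congr 1
      have hπ : Real.pi ≠ 0 := Real.pi_ne_zero
      push_cast
      field_simp
      ring
  have h0 := key 0
  have h1 := key 1
  have h2 := key 2
  have hsum := (h0.add ((h1.mul_left 2))).add h2
  apply hsum.congr
  intro m
  simp only [pow_zero, one_mul, pow_one]
  ring

lemma sum_le_prod_one_add {g : ℕ} (x : Fin g → ℝ) (hx : ∀ i, 0 ≤ x i) :
    ∑ i, x i ≤ ∏ i, (1 + x i) := by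
  have key : ∀ s : Finset (Fin g), ∑ i ∈ s, x i + 1 ≤ ∏ i ∈ s, (1 + x i) := by
    intro s
    induction s using Finset.induction with
    | empty => simp
    | insert a s' hns ih =>
      rw [Finset.sum_insert hns, Finset.prod_insert hns]
      have h1 : (0:ℝ) ≤ ∑ i ∈ s', x i := Finset.sum_nonneg fun i _ => hx i
      nlinarith [hx a]
  have := key Finset.univ
  linarith








/-- Positive definite quadratic form lower bound. -/
lemma posdef_quadratic_lower_bound {g : ℕ} (hg : 1 ≤ g) {M : Matrix (Fin g) (Fin g) ℝ}
    (hM : M.PosDef) :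
    ∃ c > 0, ∀ v : Fin g → ℝ, c * (∑ i, v i ^ 2) ≤ ∑ j, ∑ k, v j * M j k * v k := by
  set q : (Fin g → ℝ) → ℝ := fun v => ∑ j, ∑ k, v j * M j k * v k with hq
  have hqpos : ∀ v : Fin g → ℝ, v ≠ 0 → 0 < q v := by
    intro v hv
    have := (Matrix.posDef_iff_dotProduct_mulVec.mp hM).2 hv
    simpa [q, dotProduct, Matrix.mulVec, Finset.mul_sum, mul_assoc] using this
  have hqcont : Continuous q := by
    apply continuous_finset_sum
    intro j _
    apply continuous_finset_sum
    intro k _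
    exact ((continuous_apply j).mul continuous_const).mul (continuous_apply k)
  have hqhom : ∀ (t : ℝ) (v : Fin g → ℝ), q (t • v) = t ^ 2 * q v := by
    intro t v
    simp only [q, Finset.mul_sum]
    refine Finset.sum_congr rfl fun j _ => ?_
    refine Finset.sum_congr rfl fun k _ => ?_
    simp [Pi.smul_apply, smul_eq_mul]; ring
  set K : Set (Fin g → ℝ) := {v | ∑ i, v i ^ 2 = 1} with hK
  have hKc : IsCompact K := by
    have hclosed : IsClosed K :=
      IsClosed.preimage (by continuity) (isClosed_singleton (x := (1:ℝ)))
    have hbdd : Bornology.IsBounded K := by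
      apply Bornology.IsBounded.subset (Metric.isBounded_closedBall (x := (0 : Fin g → ℝ)) (r := 1))
      intro v hv
      simp only [Metric.mem_closedBall, dist_zero_right]
      rw [pi_norm_le_iff_of_nonneg zero_le_one]
      intro i
      have h1 : v i ^ 2 ≤ ∑ j, v j ^ 2 :=
        Finset.single_le_sum (fun j _ => sq_nonneg (v j)) (Finset.mem_univ i)
      rw [hv] at h1
      rw [Real.norm_eq_abs]
      exact abs_le_one_iff_mul_self_le_one.mpr (by nlinarith)
    exact Metric.isCompact_of_isClosed_isBounded hclosed hbdd
  have hKne : K.Nonempty := by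
    refine ⟨Pi.single ⟨0, hg⟩ 1, ?_⟩
    simp only [hK, Set.mem_setOf_eq]
    rw [Finset.sum_eq_single ⟨0, hg⟩]
    · simp
    · intro b _ hb; simp [Pi.single_apply, hb]
    · simp
  obtain ⟨v₀, hv₀K, hmin⟩ := hKc.exists_isMinOn hKne hqcont.continuousOn
  have hv₀ne : v₀ ≠ 0 := by
    intro h
    rw [h] at hv₀K
    simp [hK] at hv₀K
  refine ⟨q v₀, hqpos v₀ hv₀ne, fun v => ?_⟩
  rcases eq_or_ne v 0 with rfl | hv
  · simp
  · set t : ℝ := Real.sqrt (∑ i, v i ^ 2) with ht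
    have hsum_pos : 0 < ∑ i, v i ^ 2 := by
      rcases Function.ne_iff.mp hv with ⟨i, hi⟩
      have : 0 < v i ^ 2 := by
        have := pow_pos (abs_pos.mpr hi) 2
        simpa [sq_abs] using this
      exact lt_of_lt_of_le this (Finset.single_le_sum (fun j _ => sq_nonneg (v j))
        (Finset.mem_univ i))
    have htpos : 0 < t := Real.sqrt_pos.mpr hsum_pos
    have ht2 : t ^ 2 = ∑ i, v i ^ 2 := Real.sq_sqrt hsum_pos.le
    have hwK : (t⁻¹ • v) ∈ K := by
      simp only [hK, Set.mem_setOf_eq, Pi.smul_apply, smul_eq_mul, mul_pow]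
      rw [← Finset.mul_sum, ← ht2]
      field_simp
    have hle : q v₀ ≤ q (t⁻¹ • v) := hmin hwK
    have hqv : q (t⁻¹ • v) = t⁻¹ ^ 2 * q v := hqhom _ _
    rw [hqv] at hle
    have h2 : q v₀ * t ^ 2 ≤ q v := by
      calc q v₀ * t ^ 2 ≤ (t⁻¹ ^ 2 * q v) * t ^ 2 := by nlinarith [sq_nonneg t]
        _ = q v := by field_simp
    calc q v₀ * ∑ i, v i ^ 2 = q v₀ * t ^ 2 := by rw [ht2]
      _ ≤ q v := h2
  


/-- Auxiliary: the linear map `τ ↦ ∑ j k, n j * n k * τ j k`. -/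
def thetaBL {g : ℕ} (n : Fin g → ℤ) : (Fin g → Fin g → ℂ) →ₗ[ℂ] ℂ where
  toFun τ := ∑ j, ∑ k, (n j : ℂ) * (n k : ℂ) * τ j k
  map_add' x y := by
    simp only [Pi.add_apply, mul_add, Finset.sum_add_distrib]
  map_smul' c x := by
    simp only [Pi.smul_apply, smul_eq_mul, RingHom.id_apply, Finset.mul_sum]
    exact Finset.sum_congr rfl fun j _ => Finset.sum_congr rfl fun k _ => by ring

lemma thetaBL_bound {g : ℕ} (n : Fin g → ℤ) (τ : Fin g → Fin g → ℂ) :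
    ‖thetaBL n τ‖ ≤ (∑ i, |(n i : ℝ)|) ^ 2 * ‖τ‖ := by
  have step : ∀ j k, ‖(n j : ℂ) * (n k : ℂ) * τ j k‖ ≤ |(n j : ℝ)| * |(n k : ℝ)| * ‖τ‖ := by
    intro j k
    rw [norm_mul, norm_mul]
    have h1 : ‖((n j : ℤ) : ℂ)‖ = |(n j : ℝ)| := by
      rw [Complex.norm_intCast]
    have h2 : ‖((n k : ℤ) : ℂ)‖ = |(n k : ℝ)| := by
      rw [Complex.norm_intCast]
    rw [h1, h2]
    have h3 : ‖τ j k‖ ≤ ‖τ‖ := (norm_le_pi_norm (τ j) k).trans (norm_le_pi_norm τ j)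
    have h4 : (0:ℝ) ≤ |(n j : ℝ)| * |(n k : ℝ)| := by positivity
    exact mul_le_mul_of_nonneg_left h3 h4
  calc ‖thetaBL n τ‖ = ‖∑ j, ∑ k, (n j : ℂ) * (n k : ℂ) * τ j k‖ := rfl
    _ ≤ ∑ j, ∑ k, |(n j : ℝ)| * |(n k : ℝ)| * ‖τ‖ := by
        refine (norm_sum_le _ _).trans (Finset.sum_le_sum fun j _ => ?_)
        exact (norm_sum_le _ _).trans (Finset.sum_le_sum fun k _ => step j k)
    _ = (∑ i, |(n i : ℝ)|) ^ 2 * ‖τ‖ := by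
        rw [sq, Finset.sum_mul_sum, Finset.sum_mul]
        refine Finset.sum_congr rfl fun j _ => ?_
        rw [Finset.sum_mul]

/-- The continuous linear map version. -/
def thetaBC {g : ℕ} (n : Fin g → ℤ) : (Fin g → Fin g → ℂ) →L[ℂ] ℂ :=
  LinearMap.mkContinuous (thetaBL n) ((∑ i, |(n i : ℝ)|) ^ 2) (thetaBL_bound n)

lemma thetaBC_norm_le {g : ℕ} (n : Fin g → ℤ) : ‖thetaBC n‖ ≤ (∑ i, |(n i : ℝ)|) ^ 2 :=
  LinearMap.mkContinuous_norm_le _ (by positivity) _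

lemma thetaBC_apply {g : ℕ} (n : Fin g → ℤ) (τ : Fin g → Fin g → ℂ) :
    thetaBC n τ = ∑ j, ∑ k, (n j : ℂ) * (n k : ℂ) * τ j k := rfl

lemma thetaCharTerm_eq_exp {g : ℕ} (z : Fin g → ℂ) (n : Fin g → ℤ) (τ : Fin g → Fin g → ℂ) :
    thetaCharTerm (Matrix.of τ) 0 0 z n
      = Complex.exp ((Real.pi : ℂ) * Complex.I *
          (thetaBC n τ + 2 * ∑ j, (n j : ℂ) * z j)) := by
  unfold thetaCharTerm
  rw [thetaBC_apply]
  congr 1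
  simp only [Pi.zero_apply, Complex.ofReal_zero, add_zero, dotProduct, Matrix.mulVec,
    Matrix.of_apply]
  simp only [mul_add, Finset.mul_sum]
  congr 1
  · exact Finset.sum_congr rfl fun j _ => Finset.sum_congr rfl fun k _ => by ring
  · exact Finset.sum_congr rfl fun j _ => by ring

set_option maxHeartbeats 2000000 in
/-- τ ↦ θ(τ,z) is complex-differentiable at every point of the
Siegel upper half-space, as a function on the space of all g×g complex matrices. -/
theorem riemannTheta_differentiable_tau (g : ℕ) (hg : 1 ≤ g) (z : Fin g → ℂ)
    (τ₀ : Fin g → Fin g → ℂ) (hτ₀ : IsSiegel (Matrix.of τ₀)) :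
    DifferentiableAt ℂ (fun τ : Fin g → Fin g → ℂ => riemannTheta (Matrix.of τ) z) τ₀ := by
  classical
  obtain ⟨hsymm, hpos⟩ := hτ₀
  obtain ⟨c, hc, hcq⟩ := posdef_quadratic_lower_bound hg hpos
  set Z : ℝ := ‖z‖ with hZ
  have hZ0 : 0 ≤ Z := norm_nonneg z
  set a : ℝ := Real.pi * c / 2 with ha_def
  have ha : 0 < a := by positivity
  set b : ℝ := 2 * Real.pi * Z with hb_def
  have hb : 0 ≤ b := by positivity
  have hg0 : (0:ℝ) < (g : ℝ) := by exact_mod_cast hg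
  set δ : ℝ := c / (2 * g) with hδ_def
  have hδ : 0 < δ := by positivity
  set h : ℤ → ℝ := fun m => (1 + |(m:ℝ)|)^2 * Real.exp (-a * (m:ℝ)^2 + b * |(m:ℝ)|) with hh_def
  have hh0 : ∀ m, 0 ≤ h m := fun m => by positivity
  have hh1 : ∀ m : ℤ, Real.exp (-a * (m:ℝ)^2 + b * |(m:ℝ)|) ≤ h m := by
    intro m
    have h2 : (1:ℝ) ≤ (1 + |(m:ℝ)|)^2 := by nlinarith [abs_nonneg (m:ℝ)]
    exact le_mul_of_one_le_left (Real.exp_pos _).le h2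
  have hhs : Summable h := summable_one_add_abs_sq_exp ha
  set u : (Fin g → ℤ) → ℝ := fun n => Real.pi * ∏ i, h (n i) with hu_def
  have hU : Summable u := (summable_pi_prod hh0 hhs g).mul_left _
  set f : (Fin g → ℤ) → (Fin g → Fin g → ℂ) → ℂ :=
    fun n τ => thetaCharTerm (Matrix.of τ) 0 0 z n with hf_def
  set f' : (Fin g → ℤ) → (Fin g → Fin g → ℂ) → ((Fin g → Fin g → ℂ) →L[ℂ] ℂ) :=
    fun n x => Complex.exp ((Real.pi : ℂ) * Complex.I *
        (thetaBC n x + 2 * ∑ j, (n j : ℂ) * z j)) •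
      (((Real.pi : ℂ) * Complex.I) • thetaBC n) with hf'_def
  -- derivative of each term
  have hderiv : ∀ (n : Fin g → ℤ) (x : Fin g → Fin g → ℂ), HasFDerivAt (f n) (f' n x) x := by
    intro n x
    have h1 : HasFDerivAt (fun τ : Fin g → Fin g → ℂ =>
        (Real.pi : ℂ) * Complex.I * (thetaBC n τ + 2 * ∑ j, (n j : ℂ) * z j))
        (((Real.pi : ℂ) * Complex.I) • thetaBC n) x := by
      have h2 : HasFDerivAt (fun τ : Fin g → Fin g → ℂ =>
          thetaBC n τ + 2 * ∑ j, (n j : ℂ) * z j) (thetaBC n) x :=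
        (thetaBC n).hasFDerivAt.add_const _
      exact h2.const_mul _
    have h3 := h1.cexp
    refine HasFDerivAt.congr_of_eventuallyEq h3 ?_
    filter_upwards with τ
    exact thetaCharTerm_eq_exp z n τ
  -- norm bound on the ball
  have key_re : ∀ (n : Fin g → ℤ) (x : Fin g → Fin g → ℂ), x ∈ Metric.ball τ₀ δ →
      (((Real.pi : ℂ) * Complex.I) * (thetaBC n x + 2 * ∑ j, (n j : ℂ) * z j)).re ≤
        -a * (∑ i, ((n i : ℝ))^2) + b * (∑ i, |(n i : ℝ)|) := by
    intro n x hx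
    set Sn : ℝ := ∑ i, |(n i : ℝ)| with hSn
    set N2 : ℝ := ∑ i, ((n i : ℝ))^2 with hN2
    have hSn0 : 0 ≤ Sn := Finset.sum_nonneg fun i _ => abs_nonneg _
    have hCS : Sn ^ 2 ≤ (g : ℝ) * N2 := by
      have := Finset.sum_mul_sq_le_sq_mul_sq Finset.univ (fun i => |(n i : ℝ)|) (fun _ => (1:ℝ))
      simp only [mul_one, one_pow, _root_.sq_abs, Finset.sum_const, Finset.card_univ,
        Fintype.card_fin, nsmul_eq_mul] at this
      calc Sn ^ 2 ≤ N2 * ((g:ℝ) * 1) := by simpa using this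
        _ = (g:ℝ) * N2 := by ring
    -- imaginary part of the bilinear term
    have him : c * N2 - Sn ^ 2 * δ ≤ (thetaBC n x).im := by
      have hsplit : (thetaBC n x).im =
          (∑ j, ∑ k, (n j : ℝ) * (x j k).im * (n k : ℝ)) := by
        rw [thetaBC_apply]
        rw [Complex.im_sum]
        refine Finset.sum_congr rfl fun j _ => ?_
        rw [Complex.im_sum]
        refine Finset.sum_congr rfl fun k _ => ?_
        have : ((n j : ℂ) * (n k : ℂ) * x j k) = (((( (n j : ℝ) * (n k : ℝ)) : ℝ) : ℂ)) * x j k := by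
          push_cast; ring
        rw [this, Complex.im_ofReal_mul]
        ring
      have hmain : c * N2 ≤ ∑ j, ∑ k, (n j : ℝ) * (τ₀ j k).im * (n k : ℝ) := by
        have := hcq (fun i => (n i : ℝ))
        calc c * N2 ≤ ∑ j, ∑ k, (n j : ℝ) * (((Matrix.of τ₀).map Complex.im) j k) * (n k : ℝ) :=
              this
          _ = ∑ j, ∑ k, (n j : ℝ) * (τ₀ j k).im * (n k : ℝ) := by
              refine Finset.sum_congr rfl fun j _ => Finset.sum_congr rfl fun k _ => ?_
              simp [Matrix.map_apply]
      have herr : |∑ j, ∑ k, (n j : ℝ) * ((x j k).im - (τ₀ j k).im) * (n k : ℝ)| ≤ Sn ^ 2 * δ := by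
        have hxd : ∀ j k, |(x j k).im - (τ₀ j k).im| ≤ δ := by
          intro j k
          have h1 : (x j k).im - (τ₀ j k).im = (x j k - τ₀ j k).im := by simp [Complex.sub_im]
          rw [h1]
          have h2 : ‖x j k - τ₀ j k‖ ≤ ‖x - τ₀‖ := by
            calc ‖x j k - τ₀ j k‖ = ‖(x j - τ₀ j) k‖ := by simp [Pi.sub_apply]
              _ ≤ ‖x j - τ₀ j‖ := norm_le_pi_norm _ k
              _ = ‖(x - τ₀) j‖ := by simp [Pi.sub_apply]
              _ ≤ ‖x - τ₀‖ := norm_le_pi_norm _ j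
          have h3 : ‖x - τ₀‖ < δ := by
            rw [← dist_eq_norm]
            exact Metric.mem_ball.mp hx
          exact le_trans (Complex.abs_im_le_norm _) (le_of_lt (lt_of_le_of_lt h2 h3))
        calc |∑ j, ∑ k, (n j : ℝ) * ((x j k).im - (τ₀ j k).im) * (n k : ℝ)|
            ≤ ∑ j, |∑ k, (n j : ℝ) * ((x j k).im - (τ₀ j k).im) * (n k : ℝ)| :=
              Finset.abs_sum_le_sum_abs _ _
          _ ≤ ∑ j, ∑ k, |(n j : ℝ)| * δ * |(n k : ℝ)| := by
              refine Finset.sum_le_sum fun j _ => ?_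
              refine (Finset.abs_sum_le_sum_abs _ _).trans (Finset.sum_le_sum fun k _ => ?_)
              rw [abs_mul, abs_mul]
              apply mul_le_mul_of_nonneg_right _ (abs_nonneg _)
              exact mul_le_mul_of_nonneg_left (hxd j k) (abs_nonneg _)
          _ = Sn ^ 2 * δ := by
              rw [hSn, sq, Finset.sum_mul_sum, Finset.sum_mul]
              refine Finset.sum_congr rfl fun j _ => ?_
              rw [Finset.sum_mul]
              refine Finset.sum_congr rfl fun k _ => by ring
      have hdiff : (thetaBC n x).im =
          (∑ j, ∑ k, (n j : ℝ) * (τ₀ j k).im * (n k : ℝ))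
          + ∑ j, ∑ k, (n j : ℝ) * ((x j k).im - (τ₀ j k).im) * (n k : ℝ) := by
        rw [hsplit, ← Finset.sum_add_distrib]
        refine Finset.sum_congr rfl fun j _ => ?_
        rw [← Finset.sum_add_distrib]
        refine Finset.sum_congr rfl fun k _ => by ring
      have := abs_le.mp herr
      rw [hdiff]
      linarith [this.1]
    -- imaginary part of the linear term
    have hlin : -(Sn * Z) ≤ (∑ j, (n j : ℂ) * z j).im := by
      have habs : |(∑ j, (n j : ℂ) * z j).im| ≤ Sn * Z := by
        rw [Complex.im_sum]
        calc |∑ j, ((n j : ℂ) * z j).im| ≤ ∑ j, |((n j : ℂ) * z j).im| :=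
              Finset.abs_sum_le_sum_abs _ _
          _ ≤ ∑ j, |(n j : ℝ)| * Z := by
              refine Finset.sum_le_sum fun j _ => ?_
              have : ((n j : ℂ) * z j).im = (n j : ℝ) * (z j).im := by
                have : ((n j : ℤ) : ℂ) = (((n j : ℝ)) : ℂ) := by push_cast; rfl
                rw [this, Complex.im_ofReal_mul]
              rw [this, abs_mul]
              gcongr
              calc |(z j).im| ≤ ‖z j‖ := Complex.abs_im_le_norm _
                _ = ‖z j‖ := rfl
                _ ≤ ‖z‖ := norm_le_pi_norm z j
          _ = Sn * Z := by rw [hSn, Finset.sum_mul]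
      linarith [(abs_le.mp habs).1]
    -- compute the real part
    have hre : (((Real.pi : ℂ) * Complex.I) *
        (thetaBC n x + 2 * ∑ j, (n j : ℂ) * z j)).re =
        -Real.pi * ((thetaBC n x).im + 2 * (∑ j, (n j : ℂ) * z j).im) := by
      rw [mul_assoc]
      rw [Complex.re_ofReal_mul]
      have : (Complex.I * (thetaBC n x + 2 * ∑ j, (n j : ℂ) * z j)).re =
          -((thetaBC n x + 2 * ∑ j, (n j : ℂ) * z j).im) := by
        simp [Complex.mul_re]
      rw [this]
      simp [Complex.add_im, Complex.mul_im]
      ring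
    rw [hre]
    have hsδ : Sn ^ 2 * δ ≤ (c / 2) * N2 := by
      calc Sn ^ 2 * δ ≤ ((g:ℝ) * N2) * δ := by
            apply mul_le_mul_of_nonneg_right hCS hδ.le
        _ = (c / 2) * N2 := by
            rw [hδ_def]; field_simp
    have hN20 : 0 ≤ N2 := Finset.sum_nonneg fun i _ => sq_nonneg _
    have him2 : (c/2) * N2 ≤ (thetaBC n x).im := by
      have : c * N2 - Sn ^ 2 * δ ≥ c * N2 - (c/2) * N2 := by linarith
      calc (c/2) * N2 = c * N2 - (c/2)*N2 := by ring
        _ ≤ c * N2 - Sn ^ 2 * δ := by linarith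
        _ ≤ (thetaBC n x).im := him
    have hX : (c/2) * N2 - 2 * (Sn * Z) ≤ (thetaBC n x).im + 2 * (∑ j, (n j : ℂ) * z j).im := by
      linarith
    have hmul := mul_le_mul_of_nonneg_left hX Real.pi_pos.le
    calc -Real.pi * ((thetaBC n x).im + 2 * (∑ j, (n j : ℂ) * z j).im)
        ≤ -Real.pi * ((c/2) * N2 - 2 * (Sn * Z)) := by linarith
      _ = -a * N2 + b * Sn := by rw [ha_def, hb_def]; ring
  -- the exponential product identity
  have hexp_prod : ∀ n : Fin g → ℤ,
      Real.exp (-a * (∑ i, ((n i : ℝ))^2) + b * (∑ i, |(n i : ℝ)|)) =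
        ∏ i, Real.exp (-a * ((n i : ℝ))^2 + b * |(n i : ℝ)|) := by
    intro n
    rw [← Real.exp_sum]
    congr 1
    rw [Finset.sum_add_distrib, ← Finset.mul_sum, ← Finset.mul_sum]
  have hSn_prod : ∀ n : Fin g → ℤ, (∑ i, |(n i : ℝ)|)^2 ≤ ∏ i, (1 + |(n i : ℝ)|)^2 := by
    intro n
    rw [Finset.prod_pow]
    apply pow_le_pow_left₀ (Finset.sum_nonneg fun i _ => abs_nonneg _)
    exact sum_le_prod_one_add _ fun i => abs_nonneg _
  have hnorm_exp : ∀ (n : Fin g → ℤ) (x : Fin g → Fin g → ℂ), x ∈ Metric.ball τ₀ δ →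
      ‖Complex.exp ((Real.pi : ℂ) * Complex.I *
          (thetaBC n x + 2 * ∑ j, (n j : ℂ) * z j))‖ ≤
        ∏ i, Real.exp (-a * ((n i : ℝ))^2 + b * |(n i : ℝ)|) := by
    intro n x hx
    rw [Complex.norm_exp, ← hexp_prod n]
    exact Real.exp_le_exp.mpr (key_re n x hx)
  have hbound : ∀ (n : Fin g → ℤ) (x : Fin g → Fin g → ℂ), x ∈ Metric.ball τ₀ δ →
      ‖f' n x‖ ≤ u n := by
    intro n x hx
    have h1 : ‖f' n x‖ = ‖Complex.exp ((Real.pi : ℂ) * Complex.I *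
        (thetaBC n x + 2 * ∑ j, (n j : ℂ) * z j))‖ *
        (‖((Real.pi : ℂ) * Complex.I)‖ * ‖thetaBC n‖) := by
      simp only [hf'_def, smul_smul]
      exact (norm_smul (α := ℂ) (β := (Fin g → Fin g → ℂ) →L[ℂ] ℂ) _ _).trans (by rw [norm_mul, mul_assoc])
    have hπI : ‖((Real.pi : ℂ) * Complex.I)‖ = Real.pi := by
      rw [norm_mul, Complex.norm_I, mul_one, Complex.norm_real, Real.norm_eq_abs,
        abs_of_pos Real.pi_pos]
    rw [h1, hπI]
    calc ‖Complex.exp ((Real.pi : ℂ) * Complex.I *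
            (thetaBC n x + 2 * ∑ j, (n j : ℂ) * z j))‖ * (Real.pi * ‖thetaBC n‖)
        ≤ (∏ i, Real.exp (-a * ((n i : ℝ))^2 + b * |(n i : ℝ)|)) *
            (Real.pi * ∏ i, (1 + |(n i : ℝ)|)^2) := by
          have hB := (thetaBC_norm_le n).trans (hSn_prod n)
          have hexp := hnorm_exp n x hx
          have hp1 : (0:ℝ) ≤ ∏ i, Real.exp (-a * ((n i : ℝ))^2 + b * |(n i : ℝ)|) :=
            Finset.prod_nonneg fun i _ => (Real.exp_pos _).le
          gcongr
      _ = u n := by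
          rw [hu_def]
          simp only [hh_def]
          rw [Finset.prod_mul_distrib]
          ring
  -- summability at the center
  have hsum0 : Summable (fun n : Fin g → ℤ => f n τ₀) := by
    apply Summable.of_norm_bounded hU
    intro n
    have h1 : ‖f n τ₀‖ ≤ ∏ i, Real.exp (-a * ((n i : ℝ))^2 + b * |(n i : ℝ)|) := by
      simp only [hf_def]
      rw [thetaCharTerm_eq_exp z n τ₀]
      exact hnorm_exp n τ₀ (Metric.mem_ball_self hδ)
    refine h1.trans ?_
    simp only [hu_def]
    have h2 : ∏ i, Real.exp (-a * ((n i : ℝ))^2 + b * |(n i : ℝ)|) ≤ ∏ i, h (n i) := by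
      apply Finset.prod_le_prod (fun i _ => (Real.exp_pos _).le) (fun i _ => hh1 (n i))
    have hπ1 : (1:ℝ) ≤ Real.pi := by linarith [Real.pi_gt_three]
    have hp0 : (0:ℝ) ≤ ∏ i, h (n i) := Finset.prod_nonneg fun i _ => hh0 (n i)
    nlinarith [mul_le_mul_of_nonneg_right hπ1 hp0]
  -- conclude
  have final := hasFDerivAt_tsum_of_isPreconnected hU Metric.isOpen_ball
    ((convex_ball τ₀ δ).isPreconnected) (fun n x _ => hderiv n x)
    (fun n x hx => hbound n x hx) (Metric.mem_ball_self hδ) hsum0 (Metric.mem_ball_self hδ)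
  have : DifferentiableAt ℂ (fun y : Fin g → Fin g → ℂ => ∑' n : Fin g → ℤ, f n y) τ₀ :=
    final.differentiableAt
  simpa only [riemannTheta, thetaChar, hf_def] using this

end
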